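/- arXiv:2503.11642 — 2 statements merged into one kernel-verified Lean document; each statement's English description precedes it below -/
import Mathlib

section
/- For all real numbers δ, t with 0 < δ < t, one has t^{1/2} ∫_{δ/2}^δ s^{−1}(t−s)^{−1/2} ds ≤ ln(3 + 2√2). -/
open MeasureTheory Real Set

/-!
The substitution `u = √(t - s)` shows that `log s - 2 log (√t + √(t - s))` is a primitive of
`√t s⁻¹ (t - s)^{-1/2}` on `(0, t)`, so the quantity equals
`log 2 + 2 log ((√t + √(t - δ/2)) / (√t + √(t - δ)))`. Since `√2 √(t - δ/2) = √(t + (t - δ))`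
is at most `√t + √(t - δ)`, the ratio is at most `(1 + √2) / √2`, and
`log 2 + 2 log ((1 + √2) / √2) = log ((1 + √2)²) = log (3 + 2√2)`.
-/

theorem rpow_neg_one_half_eq_inv_sqrt {x : ℝ} (hx : 0 ≤ x) : x ^ (-(1:ℝ)/2) = (√x)⁻¹ := by
  rw [neg_div, rpow_neg hx, ← sqrt_eq_rpow]

theorem hasDerivAt_log_sub_two_mul_log_sqrt_add {t s : ℝ} (hs : 0 < s) (hst : s < t) :
    HasDerivAt (fun r => log r - 2 * log (√t + √(t - r)))
      (√t * (s⁻¹ * (t - s) ^ (-(1:ℝ)/2))) s := by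
  have hts : 0 < t - s := sub_pos.mpr hst
  have hsqrt : HasDerivAt (fun r => √(t - r)) (-1 / (2 * √(t - s))) s := by
    simpa using ((hasDerivAt_id s).const_sub t).sqrt hts.ne'
  have hF := (hasDerivAt_log hs.ne').sub
    (((hsqrt.const_add √t).log (by positivity)).const_mul 2)
  have hA2 : √t ^ 2 = t := sq_sqrt (hs.trans hst).le
  have hu2 : √(t - s) ^ 2 = t - s := sq_sqrt hts.le
  have hderiv : √t * (s⁻¹ * (t - s) ^ (-(1:ℝ)/2)) =
      s⁻¹ - 2 * (-1 / (2 * √(t - s)) / (√t + √(t - s))) := by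
    rw [rpow_neg_one_half_eq_inv_sqrt hts.le]
    field_simp
    linear_combination hA2 - hu2
  rw [hderiv]
  exact hF

theorem integral_sqrt_mul_inv_mul_rpow {t a b : ℝ} (h : uIcc a b ⊆ Ioo 0 t) :
    ∫ s in a..b, √t * (s⁻¹ * (t - s) ^ (-(1:ℝ)/2)) =
      (log b - 2 * log (√t + √(t - b))) - (log a - 2 * log (√t + √(t - a))) := by
  have hderiv : ∀ s ∈ uIcc a b, HasDerivAt (fun r => log r - 2 * log (√t + √(t - r)))
      (√t * (s⁻¹ * (t - s) ^ (-(1:ℝ)/2))) s :=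
    fun s hs => hasDerivAt_log_sub_two_mul_log_sqrt_add (h hs).1 (h hs).2
  refine intervalIntegral.integral_eq_sub_of_hasDerivAt hderiv ?_
  refine ContinuousOn.intervalIntegrable fun s hs => ?_
  have hs0 : s ≠ 0 := (h hs).1.ne'
  have hts : t - s ≠ 0 := (sub_pos.mpr (h hs).2).ne'
  exact (continuousAt_const.mul ((continuousAt_inv₀ hs0).mul
    ((continuousAt_const.sub continuousAt_id).rpow_const (Or.inl hts)))).continuousWithinAt

theorem sqrt_two_mul_add_sqrt_le {t δ : ℝ} (hδ : 0 ≤ δ) (hδt : δ ≤ t) :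
    √2 * (√t + √(t - δ / 2)) ≤ (1 + √2) * (√t + √(t - δ)) := by
  have hmid : √2 * √(t - δ / 2) ≤ √t + √(t - δ) := by
    rw [← sqrt_mul zero_le_two, sqrt_le_iff]
    refine ⟨by positivity, ?_⟩
    nlinarith [sq_sqrt (hδ.trans hδt), sq_sqrt (sub_nonneg.mpr hδt),
      mul_nonneg (sqrt_nonneg t) (sqrt_nonneg (t - δ))]
  nlinarith [mul_nonneg (sqrt_nonneg 2) (sqrt_nonneg (t - δ))]

theorem log_three_add_two_mul_sqrt_two : log (3 + 2 * √2) = 2 * log (1 + √2) := by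
  have hsq : 3 + 2 * √2 = (1 + √2) ^ 2 := by
    linear_combination -sq_sqrt (zero_le_two : (0:ℝ) ≤ 2)
  rw [hsq, log_pow, Nat.cast_ofNat]

/-- For `0 < δ < t`, `t^{1/2} ∫_{δ/2}^δ s⁻¹ (t-s)^{-1/2} ds ≤ ln(3+2√2)`. -/
theorem I1_bound (δ t : ℝ) (hδ : 0 < δ) (hδt : δ < t) :
    Real.sqrt t * ∫ s in Set.Ioo (δ/2) δ, s⁻¹ * (t - s) ^ (-(1:ℝ)/2) ≤
      Real.log (3 + 2 * Real.sqrt 2) := by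
  have hsub : uIcc (δ / 2) δ ⊆ Ioo 0 t := by
    rw [uIcc_of_le (by linarith)]
    exact Icc_subset_Ioo (by linarith) hδt
  rw [← integral_Ioc_eq_integral_Ioo, ← intervalIntegral.integral_of_le (by linarith),
    ← intervalIntegral.integral_const_mul, integral_sqrt_mul_inv_mul_rpow hsub,
    log_div hδ.ne' two_ne_zero, log_three_add_two_mul_sqrt_two]
  have hpos : ∀ x, 0 < √t + √x := fun x => add_pos_of_pos_of_nonneg
    (sqrt_pos.mpr (hδ.trans hδt)) (sqrt_nonneg x)
  have hmono := log_le_log (mul_pos (by positivity) (hpos _))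
    (sqrt_two_mul_add_sqrt_le hδ.le hδt.le)
  rw [log_mul (by positivity) (hpos _).ne', log_mul (by positivity) (hpos _).ne'] at hmono
  have hlog_two : log 2 = 2 * log √2 := by rw [log_sqrt zero_le_two]; ring
  linarith
end

section
/- There exists a constant c > 0 such that for every integer q ≥ 0, ∫₀^{1/8} ( sin(2^{q+3} x) · sin(x)/x )² dx ≥ c. Consequently, for all integers q₀, q₁ with 0 ≤ q₀ ≤ q₁, Σ_{q=q₀}^{q₁} ∫₀^{1/8} ( sin(8·2^{q} x) · sin(x)/x )² dx ≥ c (q₁ − q₀ + 1). -/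
/-!
On `(0, 1/8]` the factor `sin x / x` is at least `2/π` (concavity of `sin` on `[0, π/2]`), so the
integrand dominates `(2/π)² sin²(N x)` with `N = 2^{q+3} ≥ 8`. The latter integrates exactly to
`1/16 - sin(N/4)/(4N) ≥ 1/32`, uniformly in `q`; summing over `q₀ ≤ q ≤ q₁` gives the second
bound.
-/

open MeasureTheory Real Set

lemma integral_sin_mul_sq (a : ℝ) {N : ℝ} (hN : N ≠ 0) :
    ∫ x in (0)..a, sin (N * x) ^ 2 = a / 2 - sin (2 * (N * a)) / (4 * N) := by
  rw [intervalIntegral.integral_comp_mul_left (fun u => sin u ^ 2) hN, integral_sin_sq,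
    sin_two_mul]
  simp only [mul_zero, sin_zero, cos_zero, zero_mul, sub_zero, smul_eq_mul]
  field_simp
  ring

lemma sub_inv_le_setIntegral_sin_mul_sq {a N : ℝ} (ha : 0 ≤ a) (hN : 0 < N) :
    a / 2 - 1 / (4 * N) ≤ ∫ x in Ioo 0 a, sin (N * x) ^ 2 := by
  rw [← integral_Ioc_eq_integral_Ioo, ← intervalIntegral.integral_of_le ha,
    integral_sin_mul_sq a hN.ne']
  gcongr
  exact sin_le_one _

lemma abs_sin_div_self_le_one (x : ℝ) : |sin x / x| ≤ 1 := by
  rw [abs_div]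
  exact div_le_one_of_le₀ abs_sin_le_abs (abs_nonneg x)

lemma two_div_pi_le_sin_div_self {x : ℝ} (hx₀ : 0 < x) (hx : x ≤ π / 2) :
    2 / π ≤ sin x / x :=
  (le_div_iff₀ hx₀).2 (mul_le_sin hx₀.le hx)

lemma integrableOn_sq_sin_mul_mul_sin_div_self (N : ℝ) {s : Set ℝ} (hs : volume s ≠ ⊤) :
    IntegrableOn (fun x => (sin (N * x) * (sin x / x)) ^ 2) s := by
  refine Measure.integrableOn_of_bounded (M := 1) hs (by fun_prop) (ae_of_all _ fun x => ?_)
  rw [norm_pow, norm_mul, Real.norm_eq_abs, Real.norm_eq_abs]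
  exact pow_le_one₀ (by positivity)
    (mul_le_one₀ (abs_sin_le_one _) (abs_nonneg _) (abs_sin_div_self_le_one x))

lemma le_setIntegral_sq_sin_mul_mul_sin_div_self {a N : ℝ} (ha₀ : 0 ≤ a) (ha : a ≤ π / 2)
    (hN : 0 < N) :
    (2 / π) ^ 2 * (a / 2 - 1 / (4 * N)) ≤
      ∫ x in Ioo 0 a, (sin (N * x) * (sin x / x)) ^ 2 := by
  have hpointwise : ∀ x ∈ Ioo 0 a,
      (2 / π) ^ 2 * sin (N * x) ^ 2 ≤ (sin (N * x) * (sin x / x)) ^ 2 := fun x hx => by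
    rw [mul_pow, mul_comm]
    have hsinc := two_div_pi_le_sin_div_self hx.1 (hx.2.le.trans ha)
    gcongr
  calc (2 / π) ^ 2 * (a / 2 - 1 / (4 * N))
      ≤ (2 / π) ^ 2 * ∫ x in Ioo 0 a, sin (N * x) ^ 2 := by
        gcongr
        exact sub_inv_le_setIntegral_sin_mul_sq ha₀ hN
    _ = ∫ x in Ioo 0 a, (2 / π) ^ 2 * sin (N * x) ^ 2 := (integral_const_mul _ _).symm
    _ ≤ ∫ x in Ioo 0 a, (sin (N * x) * (sin x / x)) ^ 2 :=
        setIntegral_mono_on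
          ((by fun_prop : Continuous fun x => (2 / π) ^ 2 * sin (N * x) ^ 2)
            |>.integrableOn_Icc.mono_set Ioo_subset_Icc_self)
          (integrableOn_sq_sin_mul_mul_sin_div_self N measure_Ioo_lt_top.ne)
          measurableSet_Ioo hpointwise

lemma le_setIntegral_sq_sin_mul_mul_sin_div_self_of_eight_le {N : ℝ} (hN : 8 ≤ N) :
    (2 / π) ^ 2 / 32 ≤ ∫ x in Ioo 0 (1 / 8), (sin (N * x) * (sin x / x)) ^ 2 := by
  have hN₀ : 0 < N := by linarith
  have hinv : 1 / (4 * N) ≤ 1 / 32 := by gcongr; linarith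
  calc (2 / π) ^ 2 / 32 ≤ (2 / π) ^ 2 * (1 / 8 / 2 - 1 / (4 * N)) := by
        rw [div_eq_mul_one_div _ (32 : ℝ)]
        gcongr
        linarith
    _ ≤ _ := le_setIntegral_sq_sin_mul_mul_sin_div_self (by norm_num)
        (by linarith [pi_gt_three]) hN₀

/-- There is `c > 0` with `∫₀^{1/8} (sin(2^{q+3}x) sin(x)/x)² dx ≥ c` for every
integer `q ≥ 0`; consequently the sum over `q₀ ≤ q ≤ q₁` is at least `c (q₁ - q₀ + 1)`. -/
theorem sin_lower_bound :
    ∃ c > (0:ℝ),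
      (∀ q : ℕ,
        c ≤ ∫ x in Set.Ioo (0:ℝ) (1/8),
          (Real.sin (2 ^ (q + 3) * x) * (Real.sin x / x)) ^ 2) ∧
      ∀ q₀ q₁ : ℕ, q₀ ≤ q₁ →
        c * ((q₁ : ℝ) - (q₀ : ℝ) + 1) ≤
          ∑ q ∈ Finset.Icc q₀ q₁,
            ∫ x in Set.Ioo (0:ℝ) (1/8),
              (Real.sin (8 * 2 ^ q * x) * (Real.sin x / x)) ^ 2 := by
  have eight_le : ∀ q : ℕ, (8 : ℝ) ≤ 8 * 2 ^ q := fun q =>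
    le_mul_of_one_le_right (by norm_num) (one_le_pow₀ (by norm_num))
  refine ⟨(2 / π) ^ 2 / 32, by positivity, fun q => ?_, fun q₀ q₁ hq => ?_⟩
  · rw [pow_add, mul_comm, show (2 : ℝ) ^ 3 = 8 by norm_num]
    exact le_setIntegral_sq_sin_mul_mul_sin_div_self_of_eight_le (eight_le q)
  · have hcard : ((Finset.Icc q₀ q₁).card : ℝ) = (q₁ : ℝ) - q₀ + 1 := by
      rw [Nat.card_Icc, Nat.cast_sub (by omega)]
      push_cast
      ring
    calc (2 / π) ^ 2 / 32 * ((q₁ : ℝ) - q₀ + 1)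
        = (Finset.Icc q₀ q₁).card • ((2 / π) ^ 2 / 32) := by
          rw [nsmul_eq_mul, hcard, mul_comm]
      _ ≤ _ := Finset.card_nsmul_le_sum _ _ _ fun q _ =>
          le_setIntegral_sq_sin_mul_mul_sin_div_self_of_eight_le (eight_le q)
end
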